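/- arXiv:2604.04591 — 4 statements merged into one kernel-verified Lean document; each statement's English description precedes it below -/
import Mathlib

section
/- Worpitzky's identity: for every natural number n and every k ≥ 1, n^k = ∑_{c=0}^{k−1} A(k,c) · binom(n + k − 1 − c, k), where A(k,c) are the Eulerian numbers. -/
/-!
Count the `n ^ k` maps `f : Fin k → Fin n` according to the permutation `σ = Tuple.sort f`.
The maps sorted by `σ` are exactly those for which `f ∘ σ` is monotone and strictly
increasing at every descent of `σ`. Adding to `(f ∘ σ) i` the number of ascents of `σ`
before `i` makes every step strict, which identifies these maps with the strictly increasing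
maps `Fin k → Fin (n + k - 1 - des σ)`; there are `(n + k - 1 - des σ).choose k` of them.
Grouping the permutations by their number of descents gives the identity.
-/

open Finset

/-- Number of descents of a permutation of `Fin k`. -/
def descentCount {k : ℕ} (σ : Equiv.Perm (Fin k)) : ℕ :=
  (Finset.univ.filter (fun i : Fin k =>
    ∃ h : (i : ℕ) + 1 < k, σ ⟨(i : ℕ) + 1, h⟩ < σ i)).card

/-- The Eulerian number `A(k,c)`: the number of permutations of `{1,…,k}` with
exactly `c` descents. -/
def eulerian (k c : ℕ) : ℕ :=
  (Finset.univ.filter (fun σ : Equiv.Perm (Fin k) => descentCount σ = c)).card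

theorem card_strictMono_fin (k M : ℕ) : #{h : Fin k → Fin M | StrictMono h} = M.choose k := by
  let e : {h : Fin k → Fin M // StrictMono h} ≃ (Fin k ↪o Fin M) :=
    { toFun := fun h => OrderEmbedding.ofStrictMono h.1 h.2
      invFun := fun e => ⟨e, e.strictMono⟩
      left_inv := fun _ => rfl
      right_inv := fun _ => rfl }
  rw [← Fintype.card_subtype, Fintype.card_congr e, ← Nat.card_eq_fintype_card,
    Nat.card_congr Set.powersetCard.ofFinEmbEquiv, Set.powersetCard.card, Nat.card_fin]

theorem Fin.val_le_of_strictMono {m : ℕ} {f : Fin (m + 1) → ℕ} (hf : StrictMono f)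
    (i : Fin (m + 1)) : (i : ℕ) ≤ f i := by
  induction i using Fin.induction with
  | zero => exact Nat.zero_le _
  | succ i ih =>
    have := hf (Fin.castSucc_lt_succ (i := i))
    simp only [Fin.val_succ, Fin.val_castSucc] at ih ⊢
    omega

section WeakSteps

variable (p : ℕ → Prop) [DecidablePred p]

-- `p j` marks the steps `j → j + 1` that are required to be strict.
def weakSteps (i : ℕ) : ℕ := #{j ∈ range i | ¬ p j}

theorem weakSteps_succ (i : ℕ) : weakSteps p (i + 1) = weakSteps p i + if p i then 0 else 1 := by
  by_cases hi : p i <;> simp [weakSteps, range_add_one, filter_insert, hi]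

theorem weakSteps_le (i : ℕ) : weakSteps p i ≤ i :=
  (card_filter_le _ _).trans (card_range i).le

theorem weakSteps_mono : Monotone (weakSteps p) := fun _ _ h =>
  card_le_card (filter_subset_filter _ (range_subset_range.2 h))

variable {m : ℕ}

theorem strictMono_add_weakSteps_iff (g : Fin (m + 1) → ℕ) :
    StrictMono (fun i => g i + weakSteps p i) ↔
      Monotone g ∧ ∀ j : Fin m, p j → g j.castSucc < g j.succ := by
  simp only [Fin.strictMono_iff_lt_succ, Fin.monotone_iff_le_succ, Fin.val_succ,
    Fin.val_castSucc, weakSteps_succ, ← forall_and]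
  refine forall_congr' fun j => ?_
  by_cases hj : p j <;> simp only [hj, if_true, if_false, true_imp_iff, false_imp_iff, and_true] <;>
    omega

theorem weakSteps_le_of_strictMono {h : Fin (m + 1) → ℕ} (hh : StrictMono h) (i : Fin (m + 1)) :
    weakSteps p i ≤ h i :=
  (weakSteps_le p i).trans (Fin.val_le_of_strictMono hh i)

theorem monotone_sub_weakSteps {h : Fin (m + 1) → ℕ} (hh : StrictMono h) :
    Monotone (fun i => h i - weakSteps p i) ∧
      ∀ j : Fin m, p j →
        h j.castSucc - weakSteps p j.castSucc < h j.succ - weakSteps p j.succ := by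
  refine (strictMono_add_weakSteps_iff p _).1 fun i j hij => ?_
  have := weakSteps_le_of_strictMono p hh i
  have := weakSteps_le_of_strictMono p hh j
  have := hh hij
  simp only
  omega

theorem card_monotone_strict_at_eq_choose (n m : ℕ) :
    #{g : Fin (m + 1) → Fin n | Monotone g ∧ ∀ j : Fin m, p j → g j.castSucc < g j.succ}
      = (n + weakSteps p m).choose (m + 1) := by
  rw [← card_strictMono_fin]
  refine card_bij'
    (fun g _ i => ⟨g i + weakSteps p i, by
      have := (g i).2
      have := weakSteps_mono p (Nat.lt_succ_iff.1 i.2)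
      omega⟩)
    (fun h hh i => ⟨h i - weakSteps p i, ?_⟩) ?_ ?_ ?_ ?_
  · replace hh : StrictMono fun i => (h i : ℕ) := (mem_filter.1 hh).2
    have hmono := (monotone_sub_weakSteps p hh).1 (Fin.le_last i)
    have hlast := weakSteps_le_of_strictMono p hh (Fin.last m)
    have hlt := (h (Fin.last m)).2
    simp only [Fin.val_last] at hmono hlast
    omega
  · intro g hg
    simp only [mem_filter, mem_univ, true_and] at hg ⊢
    exact (strictMono_add_weakSteps_iff p fun i => (g i : ℕ)).2 hg
  · intro h hh
    simp only [mem_filter, mem_univ, true_and] at hh ⊢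
    exact monotone_sub_weakSteps p (h := fun i => (h i : ℕ)) hh
  · intro g _
    funext i
    ext
    simp
  · intro h hh
    funext i
    ext
    have := weakSteps_le_of_strictMono p (h := fun i => (h i : ℕ)) (mem_filter.1 hh).2 i
    simp only
    omega

end WeakSteps

section Descents

variable {k m : ℕ}

def IsDescent (σ : Equiv.Perm (Fin k)) (j : ℕ) : Prop :=
  ∃ h : j + 1 < k, σ ⟨j + 1, h⟩ < σ ⟨j, Nat.lt_of_succ_lt h⟩

instance (σ : Equiv.Perm (Fin k)) : DecidablePred (IsDescent σ) :=
  fun j => inferInstanceAs (Decidable (∃ _ : j + 1 < k, _))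

theorem isDescent_iff (σ : Equiv.Perm (Fin (m + 1))) (j : Fin m) :
    IsDescent σ j ↔ σ j.succ < σ j.castSucc :=
  ⟨fun ⟨_, h⟩ => h, fun h => ⟨by omega, h⟩⟩

theorem descentCount_eq_card_isDescent (σ : Equiv.Perm (Fin k)) :
    descentCount σ = #{j ∈ range k | IsDescent σ j} := by
  rw [descentCount, card_filter, card_filter]
  exact Fin.sum_univ_eq_sum_range (fun j => if IsDescent σ j then 1 else 0) k

theorem descentCount_add_weakSteps (σ : Equiv.Perm (Fin (m + 1))) :
    descentCount σ + weakSteps (IsDescent σ) m = m := by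
  have hlast : ¬ IsDescent σ m := fun ⟨_, _⟩ => by omega
  rw [descentCount_eq_card_isDescent, range_add_one, filter_insert, if_neg hlast, weakSteps,
    card_filter_add_card_filter_not, card_range]

theorem Tuple.eq_sort_iff_descents {α : Type*} [LinearOrder α] {f : Fin (m + 1) → α}
    {σ : Equiv.Perm (Fin (m + 1))} :
    σ = Tuple.sort f ↔ Monotone (f ∘ σ) ∧
      ∀ j : Fin m, σ j.succ < σ j.castSucc → f (σ j.castSucc) < f (σ j.succ) := by
  rw [Tuple.eq_sort_iff]
  refine and_congr_right fun hmono => ⟨fun hties j hdesc => ?_, fun hdesc => ?_⟩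
  · exact (hmono (Fin.castSucc_le_succ j)).lt_of_ne fun he =>
      (hties _ _ (Fin.castSucc_lt_succ (i := j)) he).asymm hdesc
  · -- `f ∘ σ` is constant between `i` and `j`, so no position there is a descent of `σ`.
    have key : ∀ j i, i ≤ j → f (σ i) = f (σ j) → σ i ≤ σ j := by
      intro j
      induction j using Fin.induction with
      | zero => intro i hi _; rw [Fin.le_zero_iff.1 hi]
      | succ j ih =>
        intro i hi he
        rcases hi.eq_or_lt with rfl | hlt
        · exact le_rfl
        have hi' := Fin.le_castSucc_iff.2 hlt
        have h1 : f (σ i) ≤ f (σ j.castSucc) := hmono hi'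
        have h2 : f (σ j.castSucc) ≤ f (σ j.succ) := hmono (Fin.castSucc_le_succ j)
        have hstep : σ j.castSucc ≤ σ j.succ := not_lt.1 fun hd =>
          lt_irrefl _ ((hdesc j hd).trans_le (he.symm.trans_le h1))
        exact (ih i hi' (le_antisymm h1 (h2.trans he.symm.le))).trans hstep
    exact fun i j hij he => (key j i hij.le he).lt_of_ne (σ.injective.ne hij.ne)

theorem card_sort_eq_choose (n : ℕ) (σ : Equiv.Perm (Fin (m + 1))) :
    #{f : Fin (m + 1) → Fin n | Tuple.sort f = σ} =
      (n + weakSteps (IsDescent σ) m).choose (m + 1) := by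
  rw [← card_monotone_strict_at_eq_choose]
  refine card_equiv (σ.symm.arrowCongr (Equiv.refl (Fin n))) fun f => ?_
  simp only [mem_filter, mem_univ, true_and, Equiv.arrowCongr_apply, Equiv.symm_symm,
    Equiv.coe_refl, Function.id_comp, isDescent_iff, eq_comm (a := Tuple.sort f),
    Tuple.eq_sort_iff_descents]
  rfl

end Descents

/-- Worpitzky's identity: `n^k = ∑_{c=0}^{k−1} A(k,c) · C(n+k−1−c, k)`. -/
theorem worpitzky (n k : ℕ) (hk : 1 ≤ k) :
    n ^ k = ∑ c ∈ Finset.range k, eulerian k c * Nat.choose (n + k - 1 - c) k := by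
  obtain ⟨m, rfl⟩ := Nat.exists_eq_add_of_le' hk
  have hfiber (σ : Equiv.Perm (Fin (m + 1))) :
      #{f : Fin (m + 1) → Fin n | Tuple.sort f = σ} =
        (n + (m + 1) - 1 - descentCount σ).choose (m + 1) := by
    have := descentCount_add_weakSteps σ
    rw [card_sort_eq_choose]
    congr 1
    omega
  calc n ^ (m + 1) = #(univ : Finset (Fin (m + 1) → Fin n)) := by simp
    _ = ∑ σ, #{f : Fin (m + 1) → Fin n | Tuple.sort f = σ} :=
      card_eq_sum_card_fiberwise fun _ _ => mem_coe.2 (mem_univ _)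
    _ = ∑ σ, (n + (m + 1) - 1 - descentCount σ).choose (m + 1) :=
      sum_congr rfl fun σ _ => hfiber σ
    _ = ∑ c ∈ range (m + 1), ∑ σ with descentCount σ = c,
          (n + (m + 1) - 1 - descentCount σ).choose (m + 1) :=
      (sum_fiberwise_of_maps_to (fun σ _ => mem_range.2 (by
        have := descentCount_add_weakSteps σ; omega)) _).symm
    _ = _ := sum_congr rfl fun c _ => by
      rw [sum_congr rfl fun σ hσ => by rw [(mem_filter.1 hσ).2], sum_const, smul_eq_mul,
        eulerian]
end

section
/- For k-summand base-N addition with incoming carry c ∈ {0,…,k−1}, the conditional expectation of the outgoing carry C' = ⌊(d_1+⋯+d_k+c)/N⌋ (with d_i independent uniform on {0,…,N−1}) equals c/N + (k−1)(N−1)/(2N). -/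
open Finset

/-! Fixing all digits but the first, Hermite's identity `∑_{a<N} ⌊(x + a)/N⌋ = x` collapses the
sum of the carries over the first digit to `d₂ + ⋯ + d_k + c`. Summing this over the `N^(k-1)`
remaining tuples leaves the total digit sum, which the symmetry `a ↦ N - 1 - a` of each digit
evaluates to `N^(k-1) (k-1) (N-1) / 2`. -/

theorem Int.sum_range_add_ediv {N : ℕ} (hN : 0 < N) (x : ℤ) :
    ∑ i ∈ Finset.range N, (x + i) / N = x := by
  have hN' : (N : ℤ) ≠ 0 := by positivity
  have step (y : ℤ) :
      ∑ i ∈ Finset.range N, (y + 1 + i) / N = ∑ i ∈ Finset.range N, (y + i) / N + 1 := by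
    -- both sides of `shift` are `∑_{i ≤ N} (y + i) / N`, split off at either end
    have shift := (sum_range_succ (fun i : ℕ => (y + i) / N) N).symm.trans
      (sum_range_succ' (fun i : ℕ => (y + i) / N) N)
    have hyN : (y + N) / N = y / N + 1 := by
      simpa using Int.add_mul_ediv_right y 1 hN'
    push_cast at shift
    simp only [add_zero, hyN, ← add_assoc, add_right_comm y _ 1] at shift
    linarith
  induction x using Int.induction_on with
  | zero =>
    refine sum_eq_zero fun i hi => Int.ediv_eq_zero_of_lt (by positivity) ?_
    simpa using mem_range.mp hi
  | succ x ih => rw [step, ih]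
  | pred x ih =>
    have := step (-x - 1)
    rw [sub_add_cancel, ih] at this
    linarith

theorem Fin.sum_univ_pi_succ {α M : Type*} [Fintype α] [AddCommMonoid M] {m : ℕ}
    (f : (Fin (m + 1) → α) → M) :
    ∑ d, f d = ∑ a, ∑ p : Fin m → α, f (Fin.cons a p) := by
  rw [← (Fin.consEquiv fun _ => α).sum_comp, Fintype.sum_prod_type]
  rfl

theorem sum_pi_sum_mul_two (m N : ℕ) :
    (∑ p : Fin m → Fin N, ∑ i, (p i : ℤ)) * 2 = N ^ m * m * (N - 1) := by
  have hrev : ∑ p : Fin m → Fin N, ∑ i, (p i : ℤ)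
      = ∑ p : Fin m → Fin N, ∑ i, ((N : ℤ) - 1 - p i) := by
    rw [← (Equiv.piCongrRight fun _ : Fin m => (Fin.revPerm : Equiv.Perm (Fin N))).sum_comp]
    refine sum_congr rfl fun p _ => sum_congr rfl fun i _ => ?_
    simp only [Equiv.piCongrRight_apply, Pi.map_apply, Fin.revPerm_apply, Fin.val_rev]
    omega
  calc (∑ p : Fin m → Fin N, ∑ i, (p i : ℤ)) * 2
      = ∑ p : Fin m → Fin N, ∑ i, ((p i : ℤ) + ((N : ℤ) - 1 - p i)) := by
        rw [mul_two]; nth_rw 2 [hrev]; simp only [← sum_add_distrib]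
    _ = N ^ m * m * (N - 1) := by
        simp only [add_sub_cancel, sum_const, card_univ, Fintype.card_fin, Fintype.card_pi,
          prod_const, nsmul_eq_mul, Nat.cast_pow]
        ring

theorem sum_pi_sum_add_ediv {N m : ℕ} (hN : 0 < N) (c : ℤ) :
    ∑ d : Fin (m + 1) → Fin N, (∑ i, (d i : ℤ) + c) / N
      = ∑ p : Fin m → Fin N, (∑ i, (p i : ℤ) + c) := by
  rw [Fin.sum_univ_pi_succ, sum_comm]
  refine sum_congr rfl fun p _ => ?_
  simp only [Fin.sum_univ_succ, Fin.cons_zero, Fin.cons_succ]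
  rw [← Int.sum_range_add_ediv hN (∑ i, (p i : ℤ) + c),
    ← Fin.sum_univ_eq_sum_range (fun a : ℕ => (∑ i, (p i : ℤ) + c + a) / N)]
  exact sum_congr rfl fun a _ => by ring_nf

theorem expected_outgoing_carry_general (k N c : ℕ) (hk : 1 ≤ k) (hN : 2 ≤ N) :
    (∑ d : Fin k → Fin N, ((((∑ i, (d i : ℤ)) + (c : ℤ)) / (N : ℤ) : ℤ) : ℚ))
      = (N : ℚ) ^ k *
          ((c : ℚ) / N + ((k : ℚ) - 1) * ((N : ℚ) - 1) / (2 * N)) := by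
  obtain ⟨m, rfl⟩ : ∃ m, k = m + 1 := ⟨k - 1, by omega⟩
  have hdigits : (∑ p : Fin m → Fin N, ∑ i, ((p i : ℤ) : ℚ)) * 2 = N ^ m * m * (N - 1) := by
    exact_mod_cast sum_pi_sum_mul_two m N
  rw [← Int.cast_sum, sum_pi_sum_add_ediv (by omega), sum_add_distrib]
  simp only [sum_const, card_univ, Fintype.card_pi, Fintype.card_fin, prod_const, nsmul_eq_mul]
  have hN0 : (N : ℚ) ≠ 0 := by positivity
  push_cast
  field_simp
  linear_combination (N : ℚ) * hdigits

/-- Expected outgoing carry: summing the outgoing carry `⌊(d₁+⋯+d_k+c)/N⌋` over all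
`N^k` digit tuples gives `N^k · (c/N + (k−1)(N−1)/(2N))`; i.e. the conditional
expectation of the outgoing carry given incoming carry `c` equals
`c/N + (k−1)(N−1)/(2N)`. -/
theorem expected_outgoing_carry (k N c : ℕ) (hk : 1 ≤ k) (hN : 2 ≤ N) (hc : c < k) :
    (∑ d : Fin k → Fin N, ((((∑ i, (d i : ℤ)) + (c : ℤ)) / (N : ℤ) : ℤ) : ℚ))
      = (N : ℚ) ^ k *
          ((c : ℚ) / N + ((k : ℚ) - 1) * ((N : ℚ) - 1) / (2 * N)) :=
  expected_outgoing_carry_general k N c hk hN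
end

section
/- Centrosymmetry of the Holte matrix: for k-summand base-N addition, the transition probability from carry c to carry c' equals the transition probability from carry k−1−c to carry k−1−c'; equivalently, in terms of counts, #{(d_1,…,d_k) ∈ {0,…,N−1}^k : ⌊(∑d_i + c)/N⌋ = c'} = #{(d_1,…,d_k) : ⌊(∑d_i + (k−1−c))/N⌋ = k−1−c'}. -/
open Finset

lemma holte_divlemma (N k m : ℕ) (hN : 1 ≤ N) (hm : m < k * N) :
    (k * N - 1 - m) / N = k - 1 - m / N := by
  have hcomm : N * k = k * N := Nat.mul_comm N k
  obtain ⟨q, hq⟩ : ∃ q, m / N = q := ⟨_, rfl⟩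
  obtain ⟨r, hr⟩ : ∃ r, m % N = r := ⟨_, rfl⟩
  rw [hq]
  have hmod : N * q + r = m := by rw [← hq, ← hr]; exact Nat.div_add_mod m N
  have hrN : r < N := by rw [← hr]; exact Nat.mod_lt _ (by omega)
  have hqk : q < k := by
    rw [← hq]
    exact Nat.div_lt_of_lt_mul (by omega : m < N * k)
  obtain ⟨a, ha⟩ : ∃ a, k - 1 - q = a := ⟨_, rfl⟩
  obtain ⟨s, hs⟩ : ∃ s, N - 1 - r = s := ⟨_, rfl⟩
  have e1 : N * a + N * q + N = N * k := by
    rw [← ha]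
    have h : (k - 1 - q) + q + 1 = k := by omega
    calc N * (k - 1 - q) + N * q + N
        = N * ((k - 1 - q) + q + 1) := by ring
      _ = N * k := by rw [h]
  have e2 : k * N - 1 - m = N * a + s := by omega
  rw [e2, Nat.mul_add_div (by omega), Nat.div_eq_of_lt (by omega : s < N)]
  omega

lemma holte_key (k N c c' S : ℕ) (hN : 1 ≤ N) (hc : c < k) (hc' : c' < k)
    (hS : S ≤ k * (N - 1)) :
    (S + c) / N = c' ↔ ((k * (N - 1) - S) + (k - 1 - c)) / N = k - 1 - c' := by
  have hcomm : N * k = k * N := Nat.mul_comm N k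
  have ekn : k * (N - 1) = k * N - k := by
    rw [Nat.mul_sub]
    simp
  have h1 : k ≤ k * N := Nat.le_mul_of_pos_right k (by omega)
  rw [ekn] at hS ⊢
  have hm : S + c < k * N := by omega
  have e2 : (k * N - k - S) + (k - 1 - c) = k * N - 1 - (S + c) := by omega
  rw [e2, holte_divlemma N k (S + c) hN hm]
  have hqk : (S + c) / N < k := Nat.div_lt_of_lt_mul (by omega : S + c < N * k)
  omega

/-- Centrosymmetry of the Holte matrix: the number of digit tuples carrying `c` to `c'`
equals the number of tuples carrying `k−1−c` to `k−1−c'`. -/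
theorem holte_centrosymmetry (k N c c' : ℕ) (hk : 1 ≤ k) (hN : 2 ≤ N)
    (hc : c < k) (hc' : c' < k) :
    (Finset.univ.filter (fun d : Fin k → Fin N =>
        ((∑ i, (d i : ℕ)) + c) / N = c')).card
      = (Finset.univ.filter (fun d : Fin k → Fin N =>
          ((∑ i, (d i : ℕ)) + (k - 1 - c)) / N = k - 1 - c')).card := by
  have hN1 : 1 ≤ N := by omega
  have hsum : ∀ d : Fin k → Fin N,
      (∑ i, ((d i).rev : ℕ)) + (∑ i, (d i : ℕ)) = k * (N - 1) := by
    intro d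
    rw [← Finset.sum_add_distrib]
    have h : ∀ i ∈ Finset.univ, ((d i).rev : ℕ) + (d i : ℕ) = N - 1 := by
      intro i _
      have := (d i).isLt
      rw [Fin.val_rev]
      omega
    rw [Finset.sum_congr rfl h, Finset.sum_const, card_univ, Fintype.card_fin,
      smul_eq_mul]
  have hSle : ∀ d : Fin k → Fin N, (∑ i, (d i : ℕ)) ≤ k * (N - 1) := by
    intro d
    have := hsum d
    omega
  apply Finset.card_bij' (fun d _ => fun i => (d i).rev) (fun d _ => fun i => (d i).rev)
  · intro d hd; funext i; simp
  · intro d hd; funext i; simp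
  · intro d hd
    simp only [Finset.mem_filter, Finset.mem_univ, true_and] at hd ⊢
    have hs : (∑ i, ((d i).rev : ℕ)) = k * (N - 1) - (∑ i, (d i : ℕ)) := by
      have := hsum d; omega
    rw [hs]
    exact (holte_key k N c c' _ hN1 hc hc' (hSle d)).mp hd
  · intro d hd
    simp only [Finset.mem_filter, Finset.mem_univ, true_and] at hd ⊢
    have hs : k * (N - 1) - (∑ i, ((d i).rev : ℕ)) = (∑ i, (d i : ℕ)) := by
      have := hsum d; omega
    refine (holte_key k N c c' _ hN1 hc hc' ?_).mpr ?_
    · have := hsum d; omega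
    · rw [hs]; exact hd
end

section
/- Multiplicative shadow-freeness is impossible: for N ≥ 2 and L ≥ 2, there is no bijection h : ℤ/N^L ℤ → (ℤ/N ℤ)^L together with a binary operation g on ℤ/N ℤ such that h(a·b)_i = g(h(a)_i, h(b)_i) for all a, b ∈ ℤ/N^L ℤ and all coordinates i. -/
/-!
Let `M = N ^ L` and `r = rad N`. If `h` turns multiplication into the coordinatewise operation
`g`, then `0` is sent to a constant tuple (its coordinates are absorbing for `g`) and `a ↦ a ^ M`
is sent to a coordinatewise map, so the set `{a | a ^ M = 0}` of nilpotents of `ℤ/Mℤ` is a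
product of `L` copies of one subset of `ℤ/Nℤ` and its size is an `L`-th power. But the
nilpotents are the multiples of `r`, so there are `M / r` of them, and for a prime `p ∣ N` the
exponent of `p` in `M / r` is `L · v_p(N) - 1`, which is not divisible by `L`.
-/
open UniqueFactorizationMonoid

section
variable {M α ι : Type*} {g : α → α → α} {e : M ≃ (ι → α)}

theorem exists_apply_pow_eq [Monoid M] (he : ∀ a b i, e (a * b) i = g (e a i) (e b i))
    {n : ℕ} (hn : n ≠ 0) : ∃ q : α → α, ∀ a i, e (a ^ n) i = q (e a i) := by
  induction n, Nat.one_le_iff_ne_zero.mpr hn using Nat.le_induction with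
  | base => exact ⟨id, fun a i => by simp⟩
  | succ n _ ih =>
    obtain ⟨q, hq⟩ := ih (by omega)
    exact ⟨fun x => g (q x) x, fun a i => by rw [pow_succ, he, hq]⟩

theorem apply_zero_eq_apply_zero [MonoidWithZero M]
    (he : ∀ a b i, e (a * b) i = g (e a i) (e b i)) (i j : ι) : e 0 i = e 0 j := by
  have h_left := he 0 (e.symm fun _ => e 0 j) i
  have h_right := he (e.symm fun _ => e 0 i) 0 j
  simp only [zero_mul, mul_zero, Equiv.apply_symm_apply] at h_left h_right
  rw [h_left, ← h_right]

theorem exists_natCard_pow_eq_zero_eq_pow [MonoidWithZero M] [Finite ι] [Nonempty ι]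
    (he : ∀ a b i, e (a * b) i = g (e a i) (e b i)) {n : ℕ} (hn : n ≠ 0) :
    ∃ t, Nat.card {a : M // a ^ n = 0} = t ^ Nat.card ι := by
  obtain ⟨q, hq⟩ := exists_apply_pow_eq he hn
  obtain ⟨i₀⟩ := ‹Nonempty ι›
  have h_iff (a : M) : a ^ n = 0 ↔ ∀ i, q (e a i) = e 0 i₀ := by
    simp only [← e.injective.eq_iff, funext_iff, hq, apply_zero_eq_apply_zero he _ i₀]
  refine ⟨Nat.card {x // q x = e 0 i₀}, ?_⟩
  rw [Nat.card_congr ((e.subtypeEquiv (q := fun f => ∀ i, q (f i) = e 0 i₀) h_iff).trans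
    (Equiv.subtypePiEquivPi (p := fun _ x => q x = e 0 i₀))), Nat.card_fun]
end

namespace ZMod

theorem pow_self_eq_zero_iff {n : ℕ} [NeZero n] (a : ZMod n) :
    a ^ n = 0 ↔ ((radical n : ℕ) : ZMod n) ∣ a := by
  constructor
  · intro ha
    have h_dvd : n ∣ a.val ^ n := by
      rwa [← natCast_eq_zero_iff, Nat.cast_pow, natCast_val, cast_id]
    obtain ⟨c, hc⟩ := (exists_dvd_pow_iff_radical_dvd (NeZero.ne n)).mp ⟨n, h_dvd⟩
    exact ⟨c, by rw [← natCast_zmod_val a, hc, Nat.cast_mul]⟩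
  · rintro ⟨c, rfl⟩
    rw [mul_pow, ← Nat.cast_pow, (natCast_eq_zero_iff _ _).mpr
      (Nat.dvd_radical_pow_self (NeZero.ne n)), zero_mul]

theorem natCard_natCast_dvd {n d : ℕ} [NeZero n] (hd : d ∣ n) :
    Nat.card {a : ZMod n // (d : ZMod n) ∣ a} = n / d := by
  have h_mem (a : ZMod n) : a ∈ AddSubgroup.zmultiples (d : ZMod n) ↔ (d : ZMod n) ∣ a := by
    rw [AddSubgroup.mem_zmultiples_iff]
    constructor
    · rintro ⟨k, rfl⟩
      exact ⟨k, by rw [zsmul_eq_mul, mul_comm]⟩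
    · rintro ⟨c, rfl⟩
      exact ⟨c.val, by rw [natCast_zsmul, nsmul_eq_mul, natCast_zmod_val, mul_comm]⟩
  rw [← Nat.card_congr (Equiv.subtypeEquivRight h_mem), Nat.card_zmultiples,
    addOrderOf_coe _ (NeZero.ne n), Nat.gcd_eq_right hd]

end ZMod

theorem div_radical_ne_pow {N L : ℕ} (hN : 2 ≤ N) (hL : 2 ≤ L) (t : ℕ) :
    N ^ L / radical N ≠ t ^ L := by
  intro h
  set p := N.minFac
  have hp : p.Prime := Nat.minFac_prime (by omega)
  have hpN : p ∣ N := Nat.minFac_dvd N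
  have h_rad : (radical N).factorization p = 1 :=
    Nat.factorization_eq_one_of_squarefree squarefree_radical hp
      ((dvd_radical_iff hp.prime.isRadical (by omega)).mpr hpN)
  have h_pos : 0 < N.factorization p := hp.factorization_pos_of_dvd (by omega) hpN
  have h_val := congrArg (·.factorization p) h
  simp only [Nat.factorization_div (radical_dvd_self.trans (dvd_pow_self N (show L ≠ 0 by omega))),
    Nat.factorization_pow, Finsupp.coe_tsub, Pi.sub_apply, Finsupp.smul_apply, smul_eq_mul,
    h_rad] at h_val
  have h_dvd_one : L ∣ 1 := by
    have := Nat.dvd_sub (dvd_mul_right L (N.factorization p)) (dvd_mul_right L (t.factorization p))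
    rwa [← h_val, Nat.sub_sub_self (by nlinarith)] at this
  have := Nat.dvd_one.mp h_dvd_one
  omega

/-- Multiplicative shadow-freeness is impossible: for `N ≥ 2`, `L ≥ 2`, there is no
bijection `h : ℤ/N^Lℤ → (ℤ/Nℤ)^L` and binary operation `g` on `ℤ/Nℤ` such that
`h(a·b)ᵢ = g(h(a)ᵢ, h(b)ᵢ)` for all `a, b` and all coordinates `i`. -/
theorem no_multiplicative_shadow_free (N L : ℕ) (hN : 2 ≤ N) (hL : 2 ≤ L) :
    ¬ ∃ (h : ZMod (N ^ L) ≃ (Fin L → ZMod N)) (g : ZMod N → ZMod N → ZMod N),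
        ∀ (a b : ZMod (N ^ L)) (i : Fin L), h (a * b) i = g (h a i) (h b i) := by
  rintro ⟨e, g, he⟩
  have hL₀ : L ≠ 0 := by omega
  have : NeZero (N ^ L) := ⟨pow_ne_zero L (by omega)⟩
  have : Nonempty (Fin L) := ⟨⟨0, by omega⟩⟩
  obtain ⟨t, ht⟩ := exists_natCard_pow_eq_zero_eq_pow he (NeZero.ne (N ^ L))
  have h_nil : Nat.card {a : ZMod (N ^ L) // a ^ (N ^ L) = 0} = N ^ L / radical (N ^ L) := by
    simp_rw [ZMod.pow_self_eq_zero_iff]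
    exact ZMod.natCard_natCast_dvd radical_dvd_self
  rw [radical_pow N hL₀, ht, Nat.card_fin] at h_nil
  exact div_radical_ne_pow hN hL t h_nil.symm
end
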